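/- arXiv:1712.09318 — 4 statements merged into one kernel-verified Lean document; each statement's English description precedes it below -/
import Mathlib

section
/- Let {f_t : t ∈ T} be an arbitrary family of functions f_t : ℝⁿ → ℝ̄ and set h := inf_{t∈T} f_t*. Then for every y ∈ ℝⁿ, (co h)(y) = inf{ Σ_{t∈supp λ} λ_t f_t*(y_t) : λ ∈ Δ(T), points y_t ∈ ℝⁿ with Σ_{t∈supp λ} λ_t y_t = y }. Moreover, the infimum is unchanged if it is restricted to λ ∈ Δ(T) with #supp λ ≤ min{n+1, #T}. -/
open scoped RealInnerProductSpace Pointwise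
open Set Filter

noncomputable section

/-- `En n` is the Euclidean space `ℝⁿ`. -/
abbrev En (n : ℕ) := EuclideanSpace ℝ (Fin n)

/-- The epigraph of an extended-real-valued function. -/
def epiS {n : ℕ} (g : En n → EReal) : Set (En n × ℝ) := {p | g p.1 ≤ (p.2 : EReal)}

/-- The Fenchel conjugate `g*`. -/
def conjF {n : ℕ} (g : En n → EReal) (y : En n) : EReal :=
  ⨆ x, (⟪y, x⟫ : EReal) - g x

/-- The effective domain of `g`. -/
def dm {n : ℕ} (g : En n → EReal) : Set (En n) := {x | g x < ⊤}

/-- `g` is proper: never `-∞` and not identically `+∞`. -/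
def ProperF {n : ℕ} (g : En n → EReal) : Prop := (∃ x, g x < ⊤) ∧ ∀ x, ⊥ < g x

/-- The ε-subdifferential `∂_ε g(x)` (empty when `g x` is not finite). -/
def eSub {n : ℕ} (g : En n → EReal) (ε : ℝ) (x : En n) : Set (En n) :=
  {y | ∃ r : ℝ, g x = (r : EReal) ∧ ∀ z, ((⟪y, z - x⟫ + r - ε : ℝ) : EReal) ≤ g z}

/-- The indicator function `δ_A` (0 on `A`, `+∞` outside). -/
def indE {n : ℕ} (A : Set (En n)) (x : En n) : EReal :=
  Set.indicator Aᶜ (fun _ => (⊤ : EReal)) x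

/-- The ε-normal set `N^ε_A(x) = ∂_ε δ_A(x)`. -/
def eNormal {n : ℕ} (A : Set (En n)) (ε : ℝ) (x : En n) : Set (En n) :=
  eSub (indE A) ε x

/-- `Γ₀`: proper, lower semicontinuous, convex. -/
def Gamma0 {n : ℕ} (g : En n → EReal) : Prop :=
  ProperF g ∧ LowerSemicontinuous g ∧ Convex ℝ (epiS g)

/-- Epi-pointed: `g*` is proper with nonempty interior of its domain. -/
def EpiPointed {n : ℕ} (g : En n → EReal) : Prop :=
  ProperF (conjF g) ∧ (interior (dm (conjF g))).Nonempty

/-- The closed convex hull `c̄o g`: the function whose epigraph is the closed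
convex hull of `epi g`. -/
def cchF {n : ℕ} (g : En n → EReal) (x : En n) : EReal :=
  sInf ((fun r : ℝ => (r : EReal)) '' {r | (x, r) ∈ closure (convexHull ℝ (epiS g))})

/-- The convex hull `co g`: the function whose epigraph is the convex hull of `epi g`. -/
def coF {n : ℕ} (g : En n → EReal) (x : En n) : EReal :=
  sInf ((fun r : ℝ => (r : EReal)) '' {r | (x, r) ∈ convexHull ℝ (epiS g)})

/-- Membership in the generalized simplex `Δ(T)`. -/
def inSimplex {T : Type*} (l : T →₀ ℝ) : Prop :=
  (∀ t, 0 ≤ l t ∧ l t ≤ 1) ∧ (∑ t ∈ l.support, l t) = 1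

/-- Membership in `Δ^ε(T)`. -/
def inDelta {T : Type*} (ε : ℝ) (e : T →₀ ℝ) : Prop :=
  (∀ t, 0 ≤ e t ∧ e t ≤ ε) ∧ (∑ t ∈ e.support, e t) = ε

end

/-!
A point `(y, r)` of the convex hull of `epi h` is a convex combination of points of `epi h`;
raising every height by `ε`, each of these points lies in the epigraph of some `f_t*`. These
epigraphs are convex, so the points attached to the same index `t` merge into one, giving a
combination indexed by `T` itself. Carathéodory's theorem for the vectors `(y_t, 1) ∈ ℝⁿ × ℝ`
then cuts the support down to `n + 1` indices; at each step the affine dependency is run in the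
direction that does not increase the cost `Σ λ_t r_t`. Conversely every such combination is a
point of the convex hull of `epi h`, because `h ≤ f_t*`; the only degenerate case is
`f_t* = -∞`, which happens only when `f_t ≡ +∞` and then forces `h ≡ -∞`.
-/

open Finsupp

lemma EReal.coe_sub_eq_bot_iff (r : ℝ) (a : EReal) : (r : EReal) - a = ⊥ ↔ a = ⊤ := by
  induction a using EReal.rec with
  | bot => simp
  | coe a => simp [← EReal.coe_sub]
  | top => simp

lemma EReal.sum_eq_top_of_ne_bot {ι : Type*} {s : Finset ι} {a : ι → EReal}
    (hbot : ∀ i ∈ s, a i ≠ ⊥) {j : ι} (hj : j ∈ s) (htop : a j = ⊤) : ∑ i ∈ s, a i = ⊤ := by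
  classical
  rw [← Finset.add_sum_erase s a hj, htop]
  exact EReal.top_add_of_ne_bot fun h => by
    obtain ⟨i, hi, hi'⟩ := WithBot.sum_eq_bot_iff.1 h
    exact hbot i (Finset.mem_of_mem_erase hi) hi'

@[simp, norm_cast]
lemma EReal.coe_finset_sum {ι : Type*} (s : Finset ι) (a : ι → ℝ) :
    ((∑ i ∈ s, a i : ℝ) : EReal) = ∑ i ∈ s, (a i : EReal) :=
  map_sum (⟨⟨Real.toEReal, EReal.coe_zero⟩, EReal.coe_add⟩ : ℝ →+ EReal) a s

lemma Finset.card_le_enatCard {T : Type*} (s : Finset T) : (s.card : ℕ∞) ≤ ENat.card T := by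
  simpa using (s : Set T).encard_le_card

lemma linearCombination_prod_one {R ι M : Type*} [Semiring R] [AddCommMonoid M] [Module R M]
    (p : ι → M) (l : ι →₀ R) :
    linearCombination R (fun i => (p i, (1 : R))) l =
      (∑ i ∈ l.support, l i • p i, ∑ i ∈ l.support, l i) := by
  simp [linearCombination_apply, Finsupp.sum, Prod.ext_iff, Prod.fst_sum, Prod.snd_sum]

section Caratheodory

variable {𝕜 ι E : Type*} [Field 𝕜] [LinearOrder 𝕜] [IsStrictOrderedRing 𝕜]
  [AddCommGroup E] [Module 𝕜 E]

lemma Finsupp.exists_pos_of_sum_eq_zero {σ : ι →₀ 𝕜} (hσ : σ ≠ 0)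
    (hsum : ∑ i ∈ σ.support, σ i = 0) : ∃ i, 0 < σ i := by
  by_contra! hneg
  obtain ⟨i, hi⟩ := Finsupp.support_nonempty_iff.2 hσ
  exact Finsupp.mem_support_iff.1 hi
    ((Finset.sum_eq_zero_iff_of_nonpos fun j _ => hneg j).1 hsum i hi)

lemma exists_support_ssubset_of_not_linearIndepOn (p : ι → E) (s : ι → 𝕜) {l : ι →₀ 𝕜}
    (hl : ∀ i, 0 ≤ l i)
    (hdep : ¬ LinearIndepOn 𝕜 (fun i => (p i, (1 : 𝕜))) (l.support : Set ι)) :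
    ∃ l' : ι →₀ 𝕜, (∀ i, 0 ≤ l' i) ∧ l'.support ⊂ l.support ∧
      linearCombination 𝕜 (fun i => (p i, (1 : 𝕜))) l' =
        linearCombination 𝕜 (fun i => (p i, (1 : 𝕜))) l ∧
      linearCombination 𝕜 s l' ≤ linearCombination 𝕜 s l := by
  classical
  obtain ⟨σ, hσl, hσv, hσne, hσs⟩ : ∃ σ : ι →₀ 𝕜, σ.support ⊆ l.support ∧
      linearCombination 𝕜 (fun i => (p i, (1 : 𝕜))) σ = 0 ∧ σ ≠ 0 ∧
      0 ≤ linearCombination 𝕜 s σ := by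
    -- orient the dependency so that stepping along `-σ` does not increase the cost
    obtain ⟨σ, hσl, hσv, hσne⟩ := linearDepOn_iff'.1 hdep
    rw [mem_supported, Finset.coe_subset] at hσl
    rcases le_total 0 (linearCombination 𝕜 s σ) with h | h
    · exact ⟨σ, hσl, hσv, hσne, h⟩
    · exact ⟨-σ, by simpa using hσl, by simp [hσv], neg_ne_zero.2 hσne, by simpa using h⟩
  -- the weights of an affine dependency sum to zero, so one of them is positive
  obtain ⟨j, hj⟩ : ∃ j, 0 < σ j := σ.exists_pos_of_sum_eq_zero hσne <| by
    simpa [linearCombination_prod_one] using congrArg Prod.snd hσv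
  obtain ⟨i₀, hi₀, hmin⟩ := (σ.support.filter (0 < σ ·)).exists_min_image (fun i => l i / σ i)
    ⟨j, by simp [hj, hj.ne']⟩
  have hσi₀ : 0 < σ i₀ := (Finset.mem_filter.1 hi₀).2
  set c := l i₀ / σ i₀
  have hc : 0 ≤ c := div_nonneg (hl i₀) hσi₀.le
  refine ⟨l - c • σ, fun i => ?_, ?_, by simp [hσv], by simpa using mul_nonneg hc hσs⟩
  · simp only [coe_sub, coe_smul, Pi.sub_apply, Pi.smul_apply, smul_eq_mul, sub_nonneg]
    rcases lt_or_ge 0 (σ i) with h | h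
    · exact (le_div_iff₀ h).1 (hmin i (by simp [h, h.ne']))
    · exact (mul_nonpos_of_nonneg_of_nonpos hc h).trans (hl i)
  · refine (Finset.ssubset_iff_of_subset ?_).2 ⟨i₀, hσl (by simpa using hσi₀.ne'), ?_⟩
    · exact support_sub.trans (Finset.union_subset_iff.2 ⟨le_rfl, (support_smul).trans hσl⟩)
    · simp [c, hσi₀.ne']

lemma exists_linearIndepOn_support_cost_le (p : ι → E) (s : ι → 𝕜) (l : ι →₀ 𝕜)
    (hl : ∀ i, 0 ≤ l i) :
    ∃ l' : ι →₀ 𝕜, (∀ i, 0 ≤ l' i) ∧ l'.support ⊆ l.support ∧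
      LinearIndepOn 𝕜 (fun i => (p i, (1 : 𝕜))) (l'.support : Set ι) ∧
      linearCombination 𝕜 (fun i => (p i, (1 : 𝕜))) l' =
        linearCombination 𝕜 (fun i => (p i, (1 : 𝕜))) l ∧
      linearCombination 𝕜 s l' ≤ linearCombination 𝕜 s l := by
  induction hN : l.support.card using Nat.strong_induction_on generalizing l with
  | _ N ih =>
  by_cases hind : LinearIndepOn 𝕜 (fun i => (p i, (1 : 𝕜))) (l.support : Set ι)
  · exact ⟨l, hl, subset_rfl, hind, rfl, le_rfl⟩
  obtain ⟨l₁, hl₁, hsub₁, hv₁, hs₁⟩ := exists_support_ssubset_of_not_linearIndepOn p s hl hind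
  obtain ⟨l', hl', hsub', hind', hv', hs'⟩ :=
    ih _ (hN ▸ Finset.card_lt_card hsub₁) l₁ hl₁ rfl
  exact ⟨l', hl', hsub'.trans hsub₁.subset, hind', hv'.trans hv₁, hs'.trans hs₁⟩

theorem exists_card_support_le_finrank_add_one_cost_le [FiniteDimensional 𝕜 E]
    (p : ι → E) (s : ι → 𝕜) (l : ι →₀ 𝕜) (hl : ∀ i, 0 ≤ l i) :
    ∃ l' : ι →₀ 𝕜, (∀ i, 0 ≤ l' i) ∧ l'.support ⊆ l.support ∧
      l'.support.card ≤ Module.finrank 𝕜 E + 1 ∧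
      ∑ i ∈ l'.support, l' i = ∑ i ∈ l.support, l i ∧
      ∑ i ∈ l'.support, l' i • p i = ∑ i ∈ l.support, l i • p i ∧
      ∑ i ∈ l'.support, l' i * s i ≤ ∑ i ∈ l.support, l i * s i := by
  obtain ⟨l', hl', hsub, hind, hv, hs⟩ := exists_linearIndepOn_support_cost_le p s l hl
  simp only [linearCombination_prod_one, Prod.mk.injEq] at hv
  refine ⟨l', hl', hsub, ?_, hv.2, hv.1, by simpa [linearCombination_apply, Finsupp.sum] using hs⟩
  simpa using hind.fintype_card_le_finrank
end Caratheodory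

section ConvexHullUnion

variable {𝕜 ι F : Type*} [Field 𝕜] [LinearOrder 𝕜] [IsStrictOrderedRing 𝕜]
  [AddCommGroup F] [Module 𝕜 F]

theorem mem_convexHull_iUnion_iff {E : ι → Set F} (hE : ∀ i, Convex 𝕜 (E i)) {x : F} :
    x ∈ convexHull 𝕜 (⋃ i, E i) ↔ ∃ (l : ι →₀ 𝕜) (z : ι → F), (∀ i, 0 ≤ l i) ∧
      ∑ i ∈ l.support, l i = 1 ∧ (∀ i ∈ l.support, z i ∈ E i) ∧
      ∑ i ∈ l.support, l i • z i = x := by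
  classical
  constructor
  · intro hx
    obtain ⟨κ, _, p, w, hp, -, hw, hw₁, rfl⟩ := eq_pos_convex_span_of_mem_convexHull hx
    choose t ht using fun k => mem_iUnion.1 (hp (mem_range_self k))
    let fiber (i : ι) := Finset.univ.filter (t · = i)
    have hfiber : ∀ i ∈ Finset.univ.image t, 0 < ∑ k ∈ fiber i, w k := by
      simp only [Finset.mem_image, Finset.mem_univ, true_and, forall_exists_index]
      rintro _ k rfl
      exact Finset.sum_pos (fun k _ => hw k) ⟨k, by simp [fiber]⟩
    let l : ι →₀ 𝕜 := Finsupp.onFinset (Finset.univ.image t) (fun i => ∑ k ∈ fiber i, w k)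
      fun i hi => by
        obtain ⟨k, hk⟩ := Finset.nonempty_of_sum_ne_zero hi
        exact Finset.mem_image.2 ⟨k, Finset.mem_univ k, (Finset.mem_filter.1 hk).2⟩
    have hl : l.support = Finset.univ.image t := by
      rw [support_onFinset, Finset.filter_true_of_mem fun i hi => (hfiber i hi).ne']
    refine ⟨l, fun i => (fiber i).centerMass w p, fun i => Finset.sum_nonneg fun k _ => (hw k).le,
      ?_, fun i hi => ?_, ?_⟩
    · rw [hl, ← hw₁, ← Finset.sum_fiberwise_of_maps_to
        (fun k _ => Finset.mem_image_of_mem t (Finset.mem_univ k)) w]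
      rfl
    · rw [hl] at hi
      exact (hE i).centerMass_mem (fun k _ => (hw k).le) (hfiber i hi)
        fun k hk => (Finset.mem_filter.1 hk).2 ▸ ht k
    · rw [hl, ← Finset.sum_fiberwise_of_maps_to
        (fun k _ => Finset.mem_image_of_mem t (Finset.mem_univ k)) (fun k => w k • p k)]
      refine Finset.sum_congr rfl fun i hi => ?_
      simp only [l, onFinset_apply, Finset.centerMass]
      rw [smul_inv_smul₀ (hfiber i hi).ne']
  · rintro ⟨l, z, hl, hl₁, hz, rfl⟩
    rw [← Finset.centerMass_eq_of_sum_1 _ _ hl₁]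
    exact l.support.centerMass_mem_convexHull (fun i _ => hl i) (by simp [hl₁])
      fun i hi => mem_iUnion.2 ⟨i, hz i hi⟩

end ConvexHullUnion

section Conjugate

variable {n : ℕ}

lemma conjF_eq_bot_iff {g : En n → EReal} {y : En n} : conjF g y = ⊥ ↔ ∀ x, g x = ⊤ := by
  simp [conjF, iSup_eq_bot, EReal.coe_sub_eq_bot_iff]

lemma convex_epiS_conjF (g : En n → EReal) : Convex ℝ (epiS (conjF g)) := by
  have hepi : epiS (conjF g) = ⋂ x, {p : En n × ℝ | (⟪p.1, x⟫ : EReal) - g x ≤ p.2} := by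
    ext p
    simp [epiS, conjF]
  rw [hepi]
  refine convex_iInter fun x => ?_
  induction g x using EReal.rec with
  | bot => simpa using convex_empty
  | top => simp [convex_univ]
  | coe c =>
    simp only [← EReal.coe_sub, EReal.coe_le_coe_iff, sub_le_comm (b := c)]
    refine convex_halfSpace_le ⟨fun p q => ?_, fun a p => ?_⟩ c
    · simp only [Prod.fst_add, Prod.snd_add, inner_add_left]; ring
    · simp only [Prod.smul_fst, Prod.smul_snd, real_inner_smul_left, smul_eq_mul]; ring

lemma coF_le (g : En n → EReal) (x : En n) : coF g x ≤ g x :=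
  EReal.le_of_forall_lt_iff_le.1 fun r hr =>
    sInf_le ⟨r, subset_convexHull ℝ _ (show g x ≤ r from hr.le), rfl⟩


variable {T : Type*}

lemma inSimplex_of_nonneg {l : T →₀ ℝ} (hl : ∀ t, 0 ≤ l t) (hl₁ : ∑ t ∈ l.support, l t = 1) :
    inSimplex l := by
  refine ⟨fun t => ⟨hl t, ?_⟩, hl₁⟩
  by_cases ht : t ∈ l.support
  · exact hl₁ ▸ Finset.single_le_sum (fun u _ => hl u) ht
  · simp [Finsupp.notMem_support_iff.1 ht]

lemma coF_sum_smul_le_sum_mul_conjF {f : T → En n → EReal} {h : En n → EReal}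
    (hh : ∀ t x, h x ≤ conjF (f t) x) {l : T →₀ ℝ} (hl : inSimplex l) (ys : T → En n) :
    coF h (∑ t ∈ l.support, l t • ys t) ≤
      ∑ t ∈ l.support, (l t : EReal) * conjF (f t) (ys t) := by
  have hpos : ∀ t ∈ l.support, 0 < l t := fun t ht =>
    (hl.1 t).1.lt_of_ne (Finsupp.mem_support_iff.1 ht).symm
  by_cases hbot : ∃ t ∈ l.support, conjF (f t) (ys t) = ⊥
  · obtain ⟨t, -, ht⟩ := hbot
    calc coF h _ ≤ h _ := coF_le h _
      _ ≤ conjF (f t) _ := hh t _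
      _ = ⊥ := conjF_eq_bot_iff.2 (conjF_eq_bot_iff.1 ht)
      _ ≤ _ := bot_le
  push Not at hbot
  by_cases htop : ∃ t ∈ l.support, conjF (f t) (ys t) = ⊤
  · obtain ⟨t, ht, htop⟩ := htop
    refine (EReal.sum_eq_top_of_ne_bot (fun u hu => ?_) ht ?_).symm ▸ le_top
    · exact (EReal.mul_ne_bot _ _).2 ⟨.inl (EReal.coe_ne_bot _), .inr (hbot u hu),
        .inl (EReal.coe_ne_top _), .inl (EReal.coe_nonneg.2 (hpos u hu).le)⟩
    · rw [htop, EReal.coe_mul_top_of_pos (hpos t ht)]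
  push Not at htop
  let s t := (conjF (f t) (ys t)).toReal
  have hs : ∀ t ∈ l.support, ((s t : ℝ) : EReal) = conjF (f t) (ys t) := fun t ht =>
    EReal.coe_toReal (htop t ht) (hbot t ht)
  have hmem : (∑ t ∈ l.support, l t • ys t, ∑ t ∈ l.support, l t * s t) ∈
      convexHull ℝ (epiS h) := by
    refine convexHull_mono (iUnion_subset fun t p hp => (hh t p.1).trans hp)
      ((mem_convexHull_iUnion_iff fun t => convex_epiS_conjF (f t)).2
        ⟨l, fun t => (ys t, s t), fun t => (hl.1 t).1, hl.2, fun t ht => (hs t ht).ge, ?_⟩)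
    simp [Prod.smul_mk, prod_mk_sum]
  calc coF h _ ≤ ((∑ t ∈ l.support, l t * s t : ℝ) : EReal) := sInf_le ⟨_, hmem, rfl⟩
    _ = _ := by
      push_cast
      exact Finset.sum_congr rfl fun t ht => by rw [hs t ht]

lemma exists_sum_mul_conjF_le_of_mem_convexHull_epiS {f : T → En n → EReal}
    {h : En n → EReal} (hdef : ∀ x, h x = ⨅ t, conjF (f t) x) {y : En n} {r : ℝ}
    (hyr : (y, r) ∈ convexHull ℝ (epiS h)) {ε : ℝ} (hε : 0 < ε) :
    ∃ (l : T →₀ ℝ) (ys : T → En n), inSimplex l ∧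
      (l.support.card : ℕ∞) ≤ min ((n : ℕ∞) + 1) (ENat.card T) ∧
      ∑ t ∈ l.support, l t • ys t = y ∧
      ∑ t ∈ l.support, (l t : EReal) * conjF (f t) (ys t) ≤ ((r + ε : ℝ) : EReal) := by
  have hshift : ((0 : En n), ε) +ᵥ epiS h ⊆ ⋃ t, epiS (conjF (f t)) := by
    rintro _ ⟨⟨x, s⟩, hxs, rfl⟩
    have hlt : h x < ((ε + s : ℝ) : EReal) :=
      hxs.trans_lt (EReal.coe_lt_coe_iff.2 (lt_add_of_pos_left s hε))
    obtain ⟨t, ht⟩ := iInf_lt_iff.1 (hdef x ▸ hlt)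
    exact mem_iUnion.2 ⟨t, by simpa [epiS] using ht.le⟩
  have hmem : (y, r + ε) ∈ convexHull ℝ (⋃ t, epiS (conjF (f t))) := by
    refine convexHull_mono hshift ?_
    rw [convexHull_vadd]
    exact ⟨_, hyr, by simp [add_comm]⟩
  obtain ⟨l, z, hl, hl₁, hz, hlz⟩ :=
    (mem_convexHull_iUnion_iff fun t => convex_epiS_conjF (f t)).1 hmem
  simp only [← prod_mk_sum, Prod.smul_fst, Prod.smul_snd, smul_eq_mul, Prod.mk.injEq] at hlz
  obtain ⟨l', hl', hsub, hcard, hsum, hbary, hcost⟩ :=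
    exists_card_support_le_finrank_add_one_cost_le (fun t => (z t).1) (fun t => (z t).2) l hl
  refine ⟨l', fun t => (z t).1, inSimplex_of_nonneg hl' (hsum.trans hl₁), le_min ?_
    (Finset.card_le_enatCard _), hbary.trans hlz.1, ?_⟩
  · exact_mod_cast (by simpa using hcard : l'.support.card ≤ n + 1)
  calc ∑ t ∈ l'.support, (l' t : EReal) * conjF (f t) (z t).1
      ≤ ∑ t ∈ l'.support, (l' t : EReal) * (z t).2 :=
        Finset.sum_le_sum fun t ht =>
          mul_le_mul_of_nonneg_left (hz t (hsub ht)) (EReal.coe_nonneg.2 (hl' t))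
    _ ≤ ((r + ε : ℝ) : EReal) := by
      exact_mod_cast hcost.trans hlz.2.le

end Conjugate

/-- For `h := inf_t f_t*`, the convex hull function `co h` is given by
the infimum of finite convex combinations `Σ λ_t f_t*(y_t)` over `λ ∈ Δ(T)` and points
`y_t` with `Σ λ_t y_t = y`; moreover the infimum is unchanged when restricted to
`λ` with `#supp λ ≤ min (n+1) (#T)`. -/
theorem statement1 {n : ℕ} {T : Type*} (f : T → En n → EReal)
    (h : En n → EReal) (hdef : ∀ y, h y = ⨅ t, conjF (f t) y) (y : En n) :
    coF h y = sInf {v : EReal | ∃ (l : T →₀ ℝ) (ys : T → En n),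
        inSimplex l ∧ (∑ t ∈ l.support, l t • ys t) = y ∧
        v = ∑ t ∈ l.support, (l t : EReal) * conjF (f t) (ys t)} ∧
    coF h y = sInf {v : EReal | ∃ (l : T →₀ ℝ) (ys : T → En n),
        inSimplex l ∧ ((l.support.card : ℕ∞) ≤ min ((n : ℕ∞) + 1) (ENat.card T)) ∧
        (∑ t ∈ l.support, l t • ys t) = y ∧
        v = ∑ t ∈ l.support, (l t : EReal) * conjF (f t) (ys t)} := by
  have squeeze : ∀ {S₁ S₂ : Set EReal}, coF h y ≤ sInf S₁ → S₂ ⊆ S₁ → sInf S₂ ≤ coF h y →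
      coF h y = sInf S₁ ∧ coF h y = sInf S₂ := fun h₁ h₂ h₃ =>
    ⟨h₁.antisymm ((sInf_le_sInf h₂).trans h₃), (h₁.trans (sInf_le_sInf h₂)).antisymm h₃⟩
  refine squeeze (le_sInf ?_) ?_ (le_sInf ?_)
  · rintro _ ⟨l, ys, hl, rfl, rfl⟩
    exact coF_sum_smul_le_sum_mul_conjF (fun t x => hdef x ▸ iInf_le _ t) hl ys
  · rintro _ ⟨l, ys, hl, -, hbary, rfl⟩
    exact ⟨l, ys, hl, hbary, rfl⟩
  · rintro _ ⟨r, hr, rfl⟩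
    refine EReal.le_of_forall_lt_iff_le.1 fun z hz => ?_
    obtain ⟨l, ys, hl, hcard, hbary, hval⟩ := exists_sum_mul_conjF_le_of_mem_convexHull_epiS
      hdef hr (sub_pos.2 (EReal.coe_lt_coe_iff.1 hz))
    exact sInf_le_of_le ⟨l, ys, hl, hcard, hbary, rfl⟩ (by simpa using hval)
end

section
/- Let g : ℝⁿ → ℝ̄ be an epi-pointed function, let η > 0 and let x ∈ ℝⁿ be such that η + g**(x) > g(x). Then ∂_η g(x) = cl( ∂_η g(x) ∩ int(dom g*) ). Consequently, for every η ≥ 0, ∂_η g(x) = ∩_{γ>0} cl( ∂_{η+γ} g(x) ∩ int(dom g*) ). -/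
open scoped RealInnerProductSpace Pointwise
open Set Filter

/-!
When `g x = r` is finite, `y ∈ ∂_ε g(x)` iff `g*(y) - ⟪y, x⟫ ≤ ε - r`, so `∂_ε g(x)` is a sublevel
set of a convex function on `dom g*`. The hypothesis `g(x) < η + g**(x)` supplies a point where
this inequality is strict; pushing it slightly towards an interior point of `dom g*` yields a point
`w` of the sublevel set in `int (dom g*)`, and the open segment from `w` to any point `y` of the
sublevel set lies in the sublevel set and in `int (dom g*)`, and accumulates at `y`. For the
second claim, every point of `∂_η' g(x)` is itself such a strict point for `η' + γ`.
-/

open Topology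

section Sublevel

variable {E : Type*} [AddCommGroup E] [Module ℝ E] [TopologicalSpace E]
  [IsTopologicalAddGroup E] [ContinuousSMul ℝ E] {D : Set E} {f : E → ℝ} {c : ℝ} {y₀ : E}

theorem ConvexOn.exists_mem_interior_lt (hf : ConvexOn ℝ D f) (hy₀ : y₀ ∈ D) (hlt : f y₀ < c)
    (hint : (interior D).Nonempty) : ∃ w ∈ interior D, f w < c := by
  obtain ⟨y₁, hy₁⟩ := hint
  have hnear : ∀ᶠ s in 𝓝[>] (0 : ℝ), s < 1 ∧ f y₀ + s * (f y₁ - f y₀) < c := by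
    refine nhdsWithin_le_nhds (Filter.Eventually.and (gt_mem_nhds one_pos) ?_)
    have hcont : Continuous fun s : ℝ => f y₀ + s * (f y₁ - f y₀) := by fun_prop
    exact hcont.continuousAt.eventually_lt continuousAt_const (by simpa using hlt)
  obtain ⟨s, ⟨hs1, hs⟩, hs0⟩ := (hnear.and self_mem_nhdsWithin).exists
  refine ⟨s • y₁ + (1 - s) • y₀,
    hf.1.combo_interior_closure_mem_interior hy₁ (subset_closure hy₀) hs0 (by linarith)
      (by ring), ?_⟩
  calc f (s • y₁ + (1 - s) • y₀) ≤ s • f y₁ + (1 - s) • f y₀ :=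
        hf.2 (interior_subset hy₁) hy₀ (le_of_lt hs0) (by linarith) (by ring)
    _ = f y₀ + s * (f y₁ - f y₀) := by simp only [smul_eq_mul]; ring
    _ < c := hs

theorem ConvexOn.sublevel_subset_closure_inter_interior (hf : ConvexOn ℝ D f) (hy₀ : y₀ ∈ D)
    (hlt : f y₀ < c) (hint : (interior D).Nonempty) :
    {y ∈ D | f y ≤ c} ⊆ closure ({y ∈ D | f y ≤ c} ∩ interior D) := by
  obtain ⟨w, hw, hwc⟩ := hf.exists_mem_interior_lt hy₀ hlt hint
  have hwS : w ∈ {y ∈ D | f y ≤ c} := ⟨interior_subset hw, hwc.le⟩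
  intro y hy
  refine closure_mono (subset_inter ?_ ?_)
    (segment_subset_closure_openSegment (right_mem_segment ℝ w y))
  · exact (openSegment_subset_segment ℝ w y).trans ((hf.convex_le c).segment_subset hwS hy)
  · exact hf.1.openSegment_interior_closure_subset_interior hw (subset_closure hy.1)

end Sublevel

namespace EReal

theorem le_coe_iff_toReal_le {e : EReal} (he : e ≠ ⊥) {a : ℝ} :
    e ≤ a ↔ e < ⊤ ∧ e.toReal ≤ a := by
  induction e <;> simp_all

end EReal

section Conjugate

variable {n : ℕ} {g : En n → EReal}

theorem conjF_le_coe_iff {y : En n} {s : ℝ} :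
    conjF g y ≤ s ↔ ∀ z, ((⟪y, z⟫ - s : ℝ) : EReal) ≤ g z := by
  simp only [conjF, iSup_le_iff]
  refine forall_congr' fun z => ?_
  induction g z with
  | bot => simp only [EReal.coe_sub_bot, top_le_iff, le_bot_iff, EReal.coe_ne_top, EReal.coe_ne_bot]
  | coe u =>
    rw [← EReal.coe_sub, EReal.coe_le_coe_iff, EReal.coe_le_coe_iff]
    constructor <;> intro h <;> linarith
  | top => simp

theorem inner_sub_le_conjF (y z : En n) : (⟪y, z⟫ : EReal) - g z ≤ conjF g y :=
  le_iSup (fun z => (⟪y, z⟫ : EReal) - g z) z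

theorem conjF_combo_le {a b : En n} {sa sb p q : ℝ} (hp : 0 ≤ p) (hq : 0 ≤ q) (hpq : p + q = 1)
    (ha : conjF g a ≤ sa) (hb : conjF g b ≤ sb) :
    conjF g (p • a + q • b) ≤ ((p * sa + q * sb : ℝ) : EReal) := by
  rw [conjF_le_coe_iff] at ha hb ⊢
  intro z
  have hinner : ⟪p • a + q • b, z⟫ = p * ⟪a, z⟫ + q * ⟪b, z⟫ := by
    rw [inner_add_left, real_inner_smul_left, real_inner_smul_left]
  calc ((⟪p • a + q • b, z⟫ - (p * sa + q * sb) : ℝ) : EReal)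
      ≤ ((max (⟪a, z⟫ - sa) (⟪b, z⟫ - sb) : ℝ) : EReal) := by
        rw [EReal.coe_le_coe_iff, hinner]
        calc p * ⟪a, z⟫ + q * ⟪b, z⟫ - (p * sa + q * sb)
            = p • (⟪a, z⟫ - sa) + q • (⟪b, z⟫ - sb) := by simp only [smul_eq_mul]; ring
          _ ≤ max (⟪a, z⟫ - sa) (⟪b, z⟫ - sb) := Convex.combo_le_max _ _ hp hq hpq
    _ ≤ g z := by
        rw [Monotone.map_max EReal.coe_strictMono.monotone]
        exact max_le (ha z) (hb z)

theorem convexOn_toReal_conjF (hbot : ∀ y, conjF g y ≠ ⊥) :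
    ConvexOn ℝ (dm (conjF g)) fun y => (conjF g y).toReal := by
  have hle : ∀ y ∈ dm (conjF g), conjF g y ≤ (conjF g y).toReal := fun y hy =>
    EReal.le_coe_toReal hy.ne
  refine ⟨fun a ha b hb p q hp hq hpq => ?_, fun a ha b hb p q hp hq hpq => ?_⟩
  · exact (conjF_combo_le hp hq hpq (hle a ha) (hle b hb)).trans_lt (EReal.coe_lt_top _)
  · have := conjF_combo_le hp hq hpq (hle a ha) (hle b hb)
    simp only [smul_eq_mul]
    exact EReal.toReal_le_toReal this (hbot _) (EReal.coe_ne_top _)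

end Conjugate

section Subdifferential

variable {n : ℕ} {g : En n → EReal} {x : En n} {r : ℝ}

theorem eSub_eq_empty (h : ∀ r : ℝ, g x ≠ r) (ε : ℝ) : eSub g ε x = ∅ :=
  eq_empty_of_forall_notMem fun _ ⟨r, hr, _⟩ => h r hr

theorem mem_eSub_iff (hr : g x = r) {ε : ℝ} {y : En n} :
    y ∈ eSub g ε x ↔ conjF g y ≤ ((⟪y, x⟫ + ε - r : ℝ) : EReal) := by
  rw [conjF_le_coe_iff]
  simp only [eSub, hr, EReal.coe_eq_coe_iff, exists_eq_left']
  refine forall_congr' fun z => ?_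
  rw [inner_sub_right]
  ring_nf

theorem isClosed_eSub (hr : g x = r) (ε : ℝ) : IsClosed (eSub g ε x) := by
  have : eSub g ε x = ⋂ z, {y | ((⟪y, z - x⟫ + r - ε : ℝ) : EReal) ≤ g z} := by
    ext y
    simp [eSub, hr]
  rw [this]
  exact isClosed_iInter fun z =>
    isClosed_le (continuous_coe_real_ereal.comp (by fun_prop)) continuous_const

theorem conjF_ne_bot (hr : g x = r) (y : En n) : conjF g y ≠ ⊥ := by
  refine ne_bot_of_le_ne_bot ?_ (inner_sub_le_conjF y x)
  rw [hr, ← EReal.coe_sub]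
  exact EReal.coe_ne_bot _

theorem eSub_eq_sublevel (hr : g x = r) (ε : ℝ) :
    eSub g ε x = {y ∈ dm (conjF g) | (conjF g y).toReal - ⟪y, x⟫ ≤ ε - r} := by
  ext y
  rw [mem_eSub_iff hr, EReal.le_coe_iff_toReal_le (conjF_ne_bot hr y)]
  simp only [mem_sep_iff]
  constructor <;> rintro ⟨h1, h2⟩ <;> exact ⟨h1, by linarith⟩

theorem convexOn_toReal_conjF_sub_inner (hr : g x = r) :
    ConvexOn ℝ (dm (conjF g)) fun y => (conjF g y).toReal - ⟪y, x⟫ :=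
  (convexOn_toReal_conjF (conjF_ne_bot hr)).sub
    (((innerₗ (En n)).flip x).concaveOn (convexOn_toReal_conjF (conjF_ne_bot hr)).1)

theorem eSub_eq_closure_inter_interior (hint : (interior (dm (conjF g))).Nonempty)
    (hr : g x = r) {ε : ℝ} {y₀ : En n} (hy₀ : y₀ ∈ dm (conjF g))
    (hlt : (conjF g y₀).toReal - ⟪y₀, x⟫ < ε - r) :
    eSub g ε x = closure (eSub g ε x ∩ interior (dm (conjF g))) := by
  refine subset_antisymm ?_ (closure_minimal inter_subset_left (isClosed_eSub hr ε))
  rw [eSub_eq_sublevel hr]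
  exact (convexOn_toReal_conjF_sub_inner hr).sublevel_subset_closure_inter_interior hy₀ hlt hint

theorem iInter_eSub_add (hr : g x = r) (ε : ℝ) :
    ⋂ γ > (0 : ℝ), eSub g (ε + γ) x = eSub g ε x := by
  ext y
  simp only [mem_iInter₂, eSub_eq_sublevel hr, mem_sep_iff]
  refine ⟨fun h => ⟨(h 1 one_pos).1, le_of_forall_pos_le_add fun γ hγ => ?_⟩,
    fun h γ _ => ⟨h.1, by linarith [h.2]⟩⟩
  linarith [(h γ hγ).2]

theorem exists_toReal_conjF_sub_inner_lt (hr : g x = r) {η : ℝ}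
    (hx : g x < η + conjF (conjF g) x) :
    ∃ y₀ ∈ dm (conjF g), (conjF g y₀).toReal - ⟪y₀, x⟫ < η - r := by
  rw [hr, add_comm] at hx
  obtain ⟨y₀, hy₀⟩ := lt_iSup_iff.1 (EReal.sub_lt_of_lt_add hx)
  refine ⟨y₀, ?_⟩
  change conjF g y₀ < ⊤ ∧ (conjF g y₀).toReal - ⟪y₀, x⟫ < η - r
  have hne := conjF_ne_bot hr y₀
  generalize conjF g y₀ = c at hy₀ hne ⊢
  induction c with
  | bot => exact absurd rfl hne
  | coe s =>
    rw [← EReal.coe_sub, ← EReal.coe_sub, EReal.coe_lt_coe_iff, real_inner_comm] at hy₀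
    exact ⟨EReal.coe_lt_top s, by rw [EReal.toReal_coe]; linarith⟩
  | top => simp at hy₀

end Subdifferential

theorem statement6_general {n : ℕ} (g : En n → EReal) (x : En n)
    (hg : EpiPointed g) (η : ℝ)
    (hx : g x < (η : EReal) + conjF (conjF g) x) :
    eSub g η x = closure (eSub g η x ∩ interior (dm (conjF g))) ∧
    ∀ η' : ℝ, 0 ≤ η' →
      eSub g η' x = ⋂ γ > (0:ℝ), closure (eSub g (η' + γ) x ∩ interior (dm (conjF g))) := by
  by_cases hfin : ∃ r : ℝ, g x = r
  swap
  · push Not at hfin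
    simp only [eSub_eq_empty hfin, empty_inter, closure_empty]
    exact ⟨trivial, fun _ _ => (subset_empty_iff.1 (iInter₂_subset 1 one_pos)).symm⟩
  obtain ⟨r, hr⟩ := hfin
  have hint := hg.2
  obtain ⟨y₀, hy₀, hlt⟩ := exists_toReal_conjF_sub_inner_lt hr hx
  refine ⟨eSub_eq_closure_inter_interior hint hr hy₀ hlt, fun η' _ => subset_antisymm ?_ ?_⟩
  · intro y hy
    rw [eSub_eq_sublevel hr] at hy
    refine mem_iInter₂.2 fun γ hγ => ?_
    rw [← eSub_eq_closure_inter_interior hint hr hy.1 (by linarith [hy.2]), eSub_eq_sublevel hr]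
    exact ⟨hy.1, by linarith [hy.2]⟩
  · calc ⋂ γ > (0:ℝ), closure (eSub g (η' + γ) x ∩ interior (dm (conjF g)))
        ⊆ ⋂ γ > (0:ℝ), eSub g (η' + γ) x :=
          iInter₂_mono fun γ _ => closure_minimal inter_subset_left (isClosed_eSub hr _)
      _ = eSub g η' x := iInter_eSub_add hr η'

/-- For an epi-pointed `g`, `η > 0` and `x` with `η + g**(x) > g(x)`,
`∂_η g(x) = cl (∂_η g(x) ∩ int (dom g*))`; consequently, for every `η ≥ 0`,
`∂_η g(x) = ⋂_{γ>0} cl (∂_{η+γ} g(x) ∩ int (dom g*))`. -/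
theorem statement6 {n : ℕ} (g : En n → EReal) (x : En n)
    (hg : EpiPointed g) (η : ℝ) (hη : 0 < η)
    (hx : g x < (η : EReal) + conjF (conjF g) x) :
    eSub g η x = closure (eSub g η x ∩ interior (dm (conjF g))) ∧
    ∀ η' : ℝ, 0 ≤ η' →
      eSub g η' x = ⋂ γ > (0:ℝ), closure (eSub g (η' + γ) x ∩ interior (dm (conjF g))) :=
  statement6_general g x hg η hx
end

section
/- Let (X,τ) be a topological space and B ⊆ X a closed set. Let {f_t : t ∈ T} be an increasing family of lower semicontinuous functions f_t : X → ℝ̄, and suppose there exists t₀ ∈ T such that f_{t₀} is inf-compact on B, i.e. {x ∈ B : f_{t₀}(x) ≤ λ} is compact for every λ ∈ ℝ. Then inf_{x∈B} sup_{t∈T} f_t(x) = sup_{t∈T} inf_{x∈B} f_t(x). -/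
open Set Filter

/-- For a closed set `B` in a topological space, an increasing family of
lsc functions `f_t` over a directed index set, and some `t₀` with `f_{t₀}` inf-compact
on `B`, the min–max equality `inf_{x∈B} sup_t f_t(x) = sup_t inf_{x∈B} f_t(x)` holds. -/
theorem statement8 {X : Type*} [TopologicalSpace X] {T : Type*} [Preorder T]
    (hdir : ∀ a b : T, ∃ c, a ≤ c ∧ b ≤ c)
    (B : Set X) (hB : IsClosed B)
    (f : T → X → EReal)
    (hmono : ∀ ⦃s t : T⦄, s ≤ t → ∀ x, f s x ≤ f t x)
    (hlsc : ∀ t, LowerSemicontinuous (f t))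
    (hcompact : ∃ t₀, ∀ lam : ℝ, IsCompact {x ∈ B | f t₀ x ≤ (lam : EReal)}) :
    ⨅ x ∈ B, ⨆ t, f t x = ⨆ t, ⨅ x ∈ B, f t x := by
  obtain ⟨t₀, ht₀⟩ := hcompact
  refine le_antisymm ?_ ?_
  · -- hard direction
    set S := ⨆ t, ⨅ x ∈ B, f t x with hS
    rw [← EReal.le_of_forall_lt_iff_le]
    intro c hc
    -- each sublevel set is nonempty
    have hne : ∀ t : T, {x ∈ B | f t x ≤ (c : EReal)}.Nonempty := by
      intro t
      have h1 : ⨅ x ∈ B, f t x ≤ S := le_iSup (fun t => ⨅ x ∈ B, f t x) t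
      have h2 : ⨅ x ∈ B, f t x < (c : EReal) := lt_of_le_of_lt h1 hc
      simp only [iInf_lt_iff] at h2
      obtain ⟨x, hxB, hx⟩ := h2
      exact ⟨x, hxB, hx.le⟩
    have hcl : ∀ t : T, IsClosed {x ∈ B | f t x ≤ (c : EReal)} := by
      intro t
      have : {x ∈ B | f t x ≤ (c : EReal)} = B ∩ (f t) ⁻¹' Iic (c : EReal) := rfl
      rw [this]
      exact hB.inter ((hlsc t).isClosed_preimage _)
    -- restrict to t ≥ t₀
    set ι := {u : T // t₀ ≤ u}
    haveI : Nonempty ι := ⟨⟨t₀, le_refl t₀⟩⟩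
    set Z : ι → Set X := fun u => {x ∈ B | f u.1 x ≤ (c : EReal)} with hZ
    have hsub : ∀ (u v : T), u ≤ v → {x ∈ B | f v x ≤ (c : EReal)} ⊆ {x ∈ B | f u x ≤ (c : EReal)} :=
      fun u v huv x hx => ⟨hx.1, le_trans (hmono huv x) hx.2⟩
    have hcomp : ∀ u : ι, IsCompact (Z u) := by
      intro u
      exact (ht₀ c).of_isClosed_subset (hcl u.1) (hsub t₀ u.1 u.2)
    have hdirZ : Directed (· ⊇ ·) Z := by
      intro u v
      obtain ⟨w, hw1, hw2⟩ := hdir u.1 v.1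
      exact ⟨⟨w, le_trans u.2 hw1⟩, hsub u.1 w hw1, hsub v.1 w hw2⟩
    obtain ⟨x, hx⟩ := IsCompact.nonempty_iInter_of_directed_nonempty_isCompact_isClosed
      Z hdirZ (fun u => hne u.1) hcomp (fun u => hcl u.1)
    simp only [mem_iInter] at hx
    have hxB : x ∈ B := (hx ⟨t₀, le_refl t₀⟩).1
    have hxle : ∀ t : T, f t x ≤ (c : EReal) := by
      intro t
      obtain ⟨w, hw1, hw2⟩ := hdir t t₀
      exact le_trans (hmono hw1 x) (hx ⟨w, hw2⟩).2
    calc ⨅ x ∈ B, ⨆ t, f t x ≤ ⨆ t, f t x := iInf₂_le x hxB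
      _ ≤ (c : EReal) := iSup_le hxle
  · exact iSup_le fun t => le_iInf₂ fun x hx =>
      le_trans (iInf₂_le x hx) (le_iSup (fun t => f t x) t)
end

section
/- Let T be directed by ≼ and let {f_t : t ∈ T} ⊆ Γ₀(ℝⁿ). Define h(x) := limsup_{t∈T} f_t(x) = inf_{t∈T} sup_{s≽t} f_s(x). If h is proper, then epi h* = ∩_{t∈T} c̄o( ∪_{s≽t} epi f_s* ). -/
open scoped RealInnerProductSpace Pointwise
open Set Filter

open scoped Topology

namespace Test

lemma rsub_rsub (r : ℝ) (x : EReal) : (r:EReal) - ((r:EReal) - x) = x := by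
  induction x using EReal.rec with
  | bot => rw [EReal.coe_sub_bot, EReal.sub_top]
  | coe m => rw [← EReal.coe_sub, ← EReal.coe_sub]; exact EReal.coe_eq_coe_iff.mpr (by ring)
  | top => rw [EReal.sub_top, EReal.coe_sub_bot]

lemma rsub_le_iff {r : ℝ} {x y : EReal} : (r:EReal) - x ≤ y ↔ (r:EReal) - y ≤ x := by
  constructor <;> intro hxy
  · calc (r:EReal) - y ≤ (r:EReal) - ((r:EReal) - x) := EReal.sub_le_sub le_rfl hxy
      _ = x := rsub_rsub r x
  · calc (r:EReal) - x ≤ (r:EReal) - ((r:EReal) - y) := EReal.sub_le_sub le_rfl hxy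
      _ = y := rsub_rsub r y

lemma rsub_iInf {ι : Sort*} (r : ℝ) (b : ι → EReal) :
    (r:EReal) - (⨅ i, b i) = ⨆ i, ((r:EReal) - b i) := by
  apply le_antisymm
  · rw [rsub_le_iff]
    refine le_iInf fun i => ?_
    rw [← rsub_rsub r (b i)]
    exact EReal.sub_le_sub le_rfl (le_iSup (fun j => (r:EReal) - b j) i)
  · exact iSup_le fun i => EReal.sub_le_sub le_rfl (iInf_le _ i)

lemma riesz {n : ℕ} (ψ : En n →L[ℝ] ℝ) : ∃ y : En n, ∀ z, ψ z = ⟪y, z⟫ :=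
  ⟨(InnerProductSpace.toDual ℝ (En n)).symm ψ, fun z => (InnerProductSpace.toDual_symm_apply).symm⟩

lemma mem_epiS_conjF {n : ℕ} {g : En n → EReal} {p : En n × ℝ} :
    p ∈ epiS (conjF g) ↔ ∀ x, (⟪p.1, x⟫ : EReal) - g x ≤ (p.2 : EReal) := by
  constructor
  · intro hp x; exact le_trans (le_iSup (fun x => (⟪p.1, x⟫ : EReal) - g x) x) hp
  · exact fun hp => iSup_le hp

lemma halfspace_cc {n : ℕ} (x : En n) (c : EReal) :
    IsClosed {p : En n × ℝ | (⟪p.1, x⟫ : EReal) - c ≤ (p.2 : EReal)} ∧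
    Convex ℝ {p : En n × ℝ | (⟪p.1, x⟫ : EReal) - c ≤ (p.2 : EReal)} := by
  induction c using EReal.rec with
  | bot =>
    have he : {p : En n × ℝ | (⟪p.1, x⟫ : EReal) - ⊥ ≤ (p.2 : EReal)} = ∅ := by
      ext p
      simp only [mem_setOf_eq, mem_empty_iff_false, iff_false]
      rw [EReal.coe_sub_bot]
      exact fun hc => (EReal.coe_lt_top p.2).not_ge hc
    rw [he]; exact ⟨isClosed_empty, convex_empty⟩
  | coe m =>
    set L := ((innerSL ℝ x).comp (ContinuousLinearMap.fst ℝ (En n) ℝ)) -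
      (ContinuousLinearMap.snd ℝ (En n) ℝ) with hL
    have he : {p : En n × ℝ | (⟪p.1, x⟫ : EReal) - (m:EReal) ≤ (p.2 : EReal)} = L ⁻¹' Iic m := by
      ext p
      simp only [mem_setOf_eq, mem_preimage, mem_Iic, hL, ContinuousLinearMap.sub_apply,
        ContinuousLinearMap.comp_apply, ContinuousLinearMap.coe_fst',
        ContinuousLinearMap.coe_snd', innerSL_apply_apply]
      rw [← EReal.coe_sub, EReal.coe_le_coe_iff, real_inner_comm]
      constructor <;> intro hh <;> linarith
    rw [he]
    refine ⟨isClosed_Iic.preimage L.continuous, ?_⟩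
    have := (convex_Iic m).linear_preimage (L : (En n × ℝ) →ₗ[ℝ] ℝ)
    simpa using this
  | top =>
    have he : {p : En n × ℝ | (⟪p.1, x⟫ : EReal) - ⊤ ≤ (p.2 : EReal)} = univ := by
      ext p; simp [EReal.sub_top]
    rw [he]; exact ⟨isClosed_univ, convex_univ⟩

lemma epiS_conjF_eq {n : ℕ} (g : En n → EReal) :
    epiS (conjF g) = ⋂ x, {p : En n × ℝ | (⟪p.1, x⟫ : EReal) - g x ≤ (p.2 : EReal)} := by
  ext p
  simp only [mem_iInter, mem_setOf_eq]
  exact mem_epiS_conjF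

lemma epiS_conjF_closed {n : ℕ} (g : En n → EReal) : IsClosed (epiS (conjF g)) := by
  rw [epiS_conjF_eq]; exact isClosed_iInter fun x => (halfspace_cc x (g x)).1

lemma epiS_conjF_convex {n : ℕ} (g : En n → EReal) : Convex ℝ (epiS (conjF g)) := by
  rw [epiS_conjF_eq]; exact convex_iInter fun x => (halfspace_cc x (g x)).2

lemma conjF_antitone {n : ℕ} {g g' : En n → EReal} (hgg : ∀ x, g x ≤ g' x) (y : En n) :
    conjF g' y ≤ conjF g y :=
  iSup_mono fun x => EReal.sub_le_sub le_rfl (hgg x)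

lemma isClosed_epiS {n : ℕ} {g : En n → EReal} (hg : LowerSemicontinuous g) :
    IsClosed (epiS g) := by
  rw [← isOpen_compl_iff, isOpen_iff_mem_nhds]
  rintro ⟨x, w⟩ hpw
  simp only [mem_compl_iff, epiS, mem_setOf_eq, not_le] at hpw
  obtain ⟨q, hq1, hq2⟩ := EReal.exists_between_coe_real hpw
  have h1 : {x' | (q:EReal) < g x'} ∈ 𝓝 x := hg x (q:EReal) hq2
  have h2 : Iio q ∈ 𝓝 w := Iio_mem_nhds (by exact_mod_cast hq1)
  have h3 := Filter.prod_mem_prod h1 h2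
  rw [← nhds_prod_eq] at h3
  refine mem_of_superset h3 ?_
  rintro ⟨z, v⟩ ⟨hz, hv⟩
  simp only [mem_compl_iff, epiS, mem_setOf_eq, not_le]
  exact lt_trans (by exact_mod_cast hv) hz

lemma conj_ne_bot {n : ℕ} {g : En n → EReal} (hg : ProperF g) (z : En n) :
    ⊥ < conjF g z := by
  obtain ⟨xf, hxf⟩ := hg.1
  have hb := hg.2 xf
  have hm : g xf = (((g xf).toReal : ℝ) : EReal) := (EReal.coe_toReal hxf.ne hb.ne').symm
  have h1 : ((⟪z, xf⟫ - (g xf).toReal : ℝ) : EReal) ≤ conjF g z := by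
    rw [EReal.coe_sub]
    exact le_trans (EReal.sub_le_sub le_rfl (le_of_eq hm))
      (le_iSup (fun x => (⟪z, x⟫ : EReal) - g x) xf)
  exact lt_of_lt_of_le (EReal.bot_lt_coe _) h1

lemma alpha_nonpos {n : ℕ} {S : Set (En n × ℝ)} {φ : (En n × ℝ) →L[ℝ] ℝ} {u : ℝ}
    (hK : ∀ q ∈ S, φ q < u)
    (hup : ∀ z w w', (z, w) ∈ S → w ≤ w' → (z, w') ∈ S)
    (hne : S.Nonempty) : φ ((0 : En n), (1 : ℝ)) ≤ 0 := by
  by_contra hcon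
  push_neg at hcon
  obtain ⟨⟨z, w⟩, hzw⟩ := hne
  set α := φ ((0 : En n), (1 : ℝ)) with hα
  set k := max 0 ((u - φ (z, w)) / α) with hk
  have hk0 : 0 ≤ k := le_max_left _ _
  have h1 : ((z, w + k) : En n × ℝ) ∈ S := hup z w _ hzw (by linarith)
  have h2 : φ (z, w + k) < u := hK _ h1
  have h3 : φ (z, w + k) = φ (z, w) + k * α := by
    have he : ((z, w + k) : En n × ℝ) = (z, w) + k • ((0 : En n), (1 : ℝ)) := by
      simp [Prod.ext_iff]
    rw [he, map_add, map_smul, smul_eq_mul]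
  have h4 : (u - φ (z, w)) / α ≤ k := le_max_right _ _
  rw [div_le_iff₀ hcon] at h4
  nlinarith


lemma conj_bound {n : ℕ} {g : En n → EReal} (hgbot : ∀ z, ⊥ < g z)
    {y₁ : En n} {α u : ℝ} (hα : α < 0)
    (hsep : ∀ z (w : ℝ), g z ≤ (w : EReal) → ⟪y₁, z⟫ + w * α < u) :
    conjF g ((-α)⁻¹ • y₁) ≤ ((u * (-α)⁻¹ : ℝ) : EReal) := by
  refine iSup_le fun z => ?_
  rcases eq_or_ne (g z) ⊤ with hz | hz
  · rw [hz, EReal.sub_top]; exact bot_le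
  · have hm : g z = (((g z).toReal : ℝ) : EReal) := (EReal.coe_toReal hz (hgbot z).ne').symm
    set m := (g z).toReal with hmdef
    have h1 := hsep z m (le_of_eq hm)
    have hpos : (0:ℝ) < -α := by linarith
    have key : ⟪(-α)⁻¹ • y₁, z⟫ - m ≤ u * (-α)⁻¹ := by
      rw [real_inner_smul_left]
      have h2 : (-α)⁻¹ * (⟪y₁, z⟫ + m * α) ≤ (-α)⁻¹ * u :=
        mul_le_mul_of_nonneg_left h1.le (inv_nonneg.mpr hpos.le)
      have h4 : (-α)⁻¹ * α = -1 := by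
        rw [inv_mul_eq_div, div_eq_iff (by linarith : -α ≠ 0)]; ring
      have h5 : (-α)⁻¹ * (m * α) = -m := by
        rw [show (-α)⁻¹ * (m * α) = ((-α)⁻¹ * α) * m by ring, h4]; ring
      have h6 : (-α)⁻¹ * (⟪y₁, z⟫ + m * α) = (-α)⁻¹ * ⟪y₁, z⟫ + (-α)⁻¹ * (m * α) := by ring
      linarith
    rw [hm, ← EReal.coe_sub]
    exact EReal.coe_le_coe_iff.mpr key

lemma decomp {n : ℕ} (φ : (En n × ℝ) →L[ℝ] ℝ) {y₁ : En n}
    (hy₁ : ∀ z, (φ.comp (ContinuousLinearMap.inl ℝ (En n) ℝ)) z = ⟪y₁, z⟫) :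
    ∀ (z : En n) (w : ℝ), φ (z, w) = ⟪y₁, z⟫ + w * φ ((0 : En n), (1 : ℝ)) := by
  intro z w
  have hzw : ((z, w) : En n × ℝ) = (z, 0) + w • ((0 : En n), (1 : ℝ)) := by
    simp [Prod.ext_iff]
  rw [hzw, map_add, map_smul, smul_eq_mul]
  congr 1
  have := hy₁ z
  simpa using this

lemma exists_affine_minorant {n : ℕ} {g : En n → EReal} (hg : Gamma0 g) :
    ∃ (y : En n) (β : ℝ), conjF g y ≤ (β : EReal) := by
  obtain ⟨x₀, hx₀t⟩ := hg.1.1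
  have hb := hg.1.2 x₀
  have hgx₀ : g x₀ = (((g x₀).toReal : ℝ) : EReal) := (EReal.coe_toReal hx₀t.ne hb.ne').symm
  set m₀ := (g x₀).toReal with hm₀
  have hnotin : ((x₀, m₀ - 1) : En n × ℝ) ∉ epiS g := by
    simp only [epiS, mem_setOf_eq, hgx₀, not_le, EReal.coe_lt_coe_iff]
    linarith
  obtain ⟨φ, u, hφK, hφp⟩ :=
    geometric_hahn_banach_closed_point hg.2.2 (isClosed_epiS hg.2.1) hnotin
  obtain ⟨y₁, hy₁⟩ := riesz (φ.comp (ContinuousLinearMap.inl ℝ (En n) ℝ))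
  have hdecomp := decomp φ hy₁
  set α := φ ((0 : En n), (1 : ℝ)) with hαdef
  have hup : ∀ z w w', (z, w) ∈ epiS g → w ≤ w' → (z, w') ∈ epiS g := by
    intro z w w' hzw hww
    exact le_trans hzw (EReal.coe_le_coe_iff.mpr hww)
  have hne : (epiS g).Nonempty := ⟨(x₀, m₀), le_of_eq hgx₀⟩
  have hα0 : α ≤ 0 := alpha_nonpos hφK hup hne
  have hα : α < 0 := by
    rcases hα0.lt_or_eq with hlt | heq
    · exact hlt
    · exfalso
      have h1 : φ (x₀, m₀) < u := hφK _ (le_of_eq hgx₀)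
      have h2 := hφp
      rw [hdecomp x₀ (m₀ - 1), heq] at h2
      rw [hdecomp x₀ m₀, heq] at h1
      linarith
  exact ⟨(-α)⁻¹ • y₁, u * (-α)⁻¹,
    conj_bound hg.1.2 hα (fun z w hw => by
      rw [← hdecomp z w]; exact hφK (z, w) hw)⟩

lemma fm {n : ℕ} {g : En n → EReal} (hg : Gamma0 g) (x : En n) :
    g x ≤ conjF (conjF g) x := by
  by_contra hcon
  push_neg at hcon
  obtain ⟨r, hr1, hr2⟩ := EReal.exists_between_coe_real hcon
  have hnotin : ((x, r) : En n × ℝ) ∉ epiS g := not_le.mpr hr2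
  obtain ⟨φ, u, hφK, hφp⟩ :=
    geometric_hahn_banach_closed_point hg.2.2 (isClosed_epiS hg.2.1) hnotin
  obtain ⟨y₁, hy₁⟩ := riesz (φ.comp (ContinuousLinearMap.inl ℝ (En n) ℝ))
  have hdecomp := decomp φ hy₁
  set α := φ ((0 : En n), (1 : ℝ)) with hαdef
  have hup : ∀ z w w', (z, w) ∈ epiS g → w ≤ w' → (z, w') ∈ epiS g := by
    intro z w w' hzw hww
    exact le_trans hzw (EReal.coe_le_coe_iff.mpr hww)
  obtain ⟨x₀, hx₀t⟩ := hg.1.1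
  have hbx₀ := hg.1.2 x₀
  have hgx₀ : g x₀ = (((g x₀).toReal : ℝ) : EReal) := (EReal.coe_toReal hx₀t.ne hbx₀.ne').symm
  have hne : (epiS g).Nonempty := ⟨(x₀, (g x₀).toReal), le_of_eq hgx₀⟩
  have hα0 : α ≤ 0 := alpha_nonpos hφK hup hne
  have hφpval : u < ⟪y₁, x⟫ + r * α := by
    have h2 := hφp
    rw [hdecomp x r] at h2
    exact h2
  rcases hα0.lt_or_eq with hα | hα
  · -- α < 0
    have hstar := conj_bound hg.1.2 hα (fun z w hw => by
      rw [← hdecomp z w]; exact hφK (z, w) hw)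
    set y := (-α)⁻¹ • y₁ with hy
    set β := u * (-α)⁻¹ with hβ
    have h1 : ((⟪x, y⟫ - β : ℝ) : EReal) ≤ conjF (conjF g) x := by
      rw [EReal.coe_sub]
      calc (⟪x, y⟫ : EReal) - (β : EReal) ≤ (⟪x, y⟫ : EReal) - conjF g y :=
            EReal.sub_le_sub le_rfl hstar
        _ ≤ conjF (conjF g) x := le_iSup (fun y' => (⟪x, y'⟫ : EReal) - conjF g y') y
    have h2 : ⟪x, y⟫ - β < r := by
      have := lt_of_le_of_lt h1 hr1
      exact_mod_cast this
    have hpos : (0:ℝ) < -α := by linarith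
    have h4 : ⟪x, y⟫ = (-α)⁻¹ * ⟪x, y₁⟫ := real_inner_smul_right _ _ _
    have hcomm : ⟪y₁, x⟫ = ⟪x, y₁⟫ := real_inner_comm _ _
    have h5 : (-α)⁻¹ * (u - r * α) ≤ (-α)⁻¹ * ⟪x, y₁⟫ :=
      mul_le_mul_of_nonneg_left (by linarith) (inv_nonneg.mpr hpos.le)
    have hia : (-α)⁻¹ * α = -1 := by
      rw [inv_mul_eq_div, div_eq_iff (by linarith : -α ≠ 0)]; ring
    have h6 : (-α)⁻¹ * (u - r * α) = u * (-α)⁻¹ + r := by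
      have hrw : (-α)⁻¹ * (u - r * α) = u * (-α)⁻¹ - ((-α)⁻¹ * α) * r := by ring
      rw [hrw, hia]; ring
    linarith
  · -- α = 0
    obtain ⟨y₀, β₀, hy₀⟩ := exists_affine_minorant hg
    have hxy₁u : u < ⟪y₁, x⟫ := by
      rw [hα, mul_zero, add_zero] at hφpval
      exact hφpval
    have key : ∀ lam : ℝ, 0 < lam →
        ((⟪x, y₀⟫ + lam * ⟪x, y₁⟫ - (β₀ + lam * u) : ℝ) : EReal) ≤ conjF (conjF g) x := by
      intro lam hlam
      have hstar : conjF g (y₀ + lam • y₁) ≤ ((β₀ + lam * u : ℝ) : EReal) := by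
        refine iSup_le fun z => ?_
        rcases eq_or_ne (g z) ⊤ with hz | hz
        · rw [hz, EReal.sub_top]; exact bot_le
        · have hzb := hg.1.2 z
          have hgz : g z = (((g z).toReal : ℝ) : EReal) := (EReal.coe_toReal hz hzb.ne').symm
          set m := (g z).toReal with hmdef
          have hz1 : ⟪y₀, z⟫ - m ≤ β₀ := by
            have hh : ((⟪y₀, z⟫ - m : ℝ) : EReal) ≤ (β₀ : EReal) := by
              rw [EReal.coe_sub]
              refine le_trans ?_ hy₀
              refine le_trans (EReal.sub_le_sub le_rfl (le_of_eq hgz)) ?_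
              exact le_iSup (fun x' => (⟪y₀, x'⟫ : EReal) - g x') z
            exact EReal.coe_le_coe_iff.mp hh
          have hz2 : ⟪y₁, z⟫ < u := by
            have hh := hφK (z, m) (le_of_eq hgz)
            rw [hdecomp z m, hα, mul_zero, add_zero] at hh
            exact hh
          have hfin : ⟪y₀ + lam • y₁, z⟫ - m ≤ β₀ + lam * u := by
            rw [inner_add_left, real_inner_smul_left]
            nlinarith
          rw [hgz, ← EReal.coe_sub]
          exact EReal.coe_le_coe_iff.mpr hfin
      have hinner : ⟪x, y₀ + lam • y₁⟫ = ⟪x, y₀⟫ + lam * ⟪x, y₁⟫ := by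
        rw [inner_add_right, real_inner_smul_right]
      calc ((⟪x, y₀⟫ + lam * ⟪x, y₁⟫ - (β₀ + lam * u) : ℝ) : EReal)
          = (⟪x, y₀ + lam • y₁⟫ : EReal) - ((β₀ + lam * u : ℝ) : EReal) := by
            rw [← EReal.coe_sub, hinner]
        _ ≤ (⟪x, y₀ + lam • y₁⟫ : EReal) - conjF g (y₀ + lam • y₁) :=
            EReal.sub_le_sub le_rfl hstar
        _ ≤ conjF (conjF g) x :=
            le_iSup (fun y' => (⟪x, y'⟫ : EReal) - conjF g y') (y₀ + lam • y₁)
    have key2 : ∀ lam : ℝ, 0 < lam → ⟪x, y₀⟫ + lam * ⟪x, y₁⟫ - (β₀ + lam * u) < r := by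
      intro lam hl
      have := lt_of_le_of_lt (key lam hl) hr1
      exact_mod_cast this
    have hd : (0:ℝ) < ⟪x, y₁⟫ - u := by
      have hcomm : ⟪y₁, x⟫ = ⟪x, y₁⟫ := real_inner_comm _ _
      linarith
    set lam := max 1 ((r - ⟪x, y₀⟫ + β₀ + 1) / (⟪x, y₁⟫ - u)) with hlamdef
    have hl1 : (0:ℝ) < lam := lt_of_lt_of_le one_pos (le_max_left _ _)
    have h7 := key2 lam hl1
    have h8 : (r - ⟪x, y₀⟫ + β₀ + 1) / (⟪x, y₁⟫ - u) ≤ lam := le_max_right _ _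
    rw [div_le_iff₀ hd] at h8
    nlinarith


lemma main_sep {n : ℕ} {T : Type*} [Preorder T] (f : T → En n → EReal)
    (hf : ∀ t, Gamma0 (f t)) (c : T) (x₀ : En n) (β₁ : ℝ)
    (hx₀ : ∀ s, s ≥ c → f s x₀ ≤ (β₁ : EReal)) (p : En n × ℝ)
    (hpc : ∀ x, (⟪p.1, x⟫ : EReal) - (⨆ s ≥ c, f s x) ≤ (p.2 : EReal)) :
    p ∈ closure (convexHull ℝ (⋃ s ≥ c, epiS (conjF (f s)))) := by
  by_contra hout
  set S := ⋃ s ≥ c, epiS (conjF (f s)) with hS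
  have hSK : S ⊆ closure (convexHull ℝ S) := (subset_convexHull ℝ S).trans subset_closure
  obtain ⟨φ, u, hφK, hφp⟩ := geometric_hahn_banach_closed_point
    ((convex_convexHull ℝ S).closure) isClosed_closure hout
  obtain ⟨y₁, hy₁⟩ := riesz (φ.comp (ContinuousLinearMap.inl ℝ (En n) ℝ))
  have hdecomp := decomp φ hy₁
  set α := φ ((0 : En n), (1 : ℝ)) with hαdef
  obtain ⟨ya, βa, hya⟩ := exists_affine_minorant (hf c)
  have hSne : S.Nonempty := ⟨(ya, βa), mem_iUnion₂.mpr ⟨c, le_rfl, hya⟩⟩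
  have hSup : ∀ z w w', (z, w) ∈ S → w ≤ w' → (z, w') ∈ S := by
    intro z w w' hzw hww
    rw [hS, mem_iUnion₂] at hzw ⊢
    obtain ⟨s, hs, hzs⟩ := hzw
    exact ⟨s, hs, le_trans hzs (EReal.coe_le_coe_iff.mpr hww)⟩
  have hα0 : α ≤ 0 := alpha_nonpos (fun q hq => hφK q (hSK hq)) hSup hSne
  have hmemS : ∀ s, s ≥ c → ∀ z (w : ℝ), conjF (f s) z ≤ (w : EReal) →
      ⟪y₁, z⟫ + w * α < u := by
    intro s hs z w hw
    have h0 : ((z, w) : En n × ℝ) ∈ S := mem_iUnion₂.mpr ⟨s, hs, hw⟩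
    have h1 := hφK _ (hSK h0)
    rwa [hdecomp z w] at h1
  have hlow : ∀ s, s ≥ c → ∀ z (w : ℝ), conjF (f s) z ≤ (w : EReal) →
      ⟪x₀, z⟫ - w ≤ β₁ := by
    intro s hs z w hw
    have h1 : ((⟪z, x₀⟫ - β₁ : ℝ) : EReal) ≤ conjF (f s) z := by
      rw [EReal.coe_sub]
      exact le_trans (EReal.sub_le_sub le_rfl (hx₀ s hs))
        (le_iSup (fun x => (⟪z, x⟫ : EReal) - f s x) x₀)
    have h2 := EReal.coe_le_coe_iff.mp (le_trans h1 hw)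
    have hco := real_inner_comm z x₀
    linarith
  have claim : ∀ (x' : En n) (β' : ℝ),
      (∀ s, s ≥ c → ∀ z (w : ℝ), conjF (f s) z ≤ (w : EReal) → ⟪x', z⟫ - w ≤ β') →
      ⟪p.1, x'⟫ - β' ≤ p.2 := by
    intro x' β' hb
    have hfs : ∀ s, s ≥ c → f s x' ≤ (β' : EReal) := by
      intro s hs
      refine le_trans (fm (hf s) x') ?_
      show (⨆ z, (⟪x', z⟫ : EReal) - conjF (f s) z) ≤ (β' : EReal)
      refine iSup_le fun z => ?_
      rcases eq_or_ne (conjF (f s) z) ⊤ with hz | hz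
      · rw [hz, EReal.sub_top]; exact bot_le
      · have hzb := conj_ne_bot (hf s).1 z
        have hw : conjF (f s) z = (((conjF (f s) z).toReal : ℝ) : EReal) :=
          (EReal.coe_toReal hz hzb.ne').symm
        rw [hw, ← EReal.coe_sub]
        exact EReal.coe_le_coe_iff.mpr (hb s hs z _ (le_of_eq hw))
    have hsup : (⨆ s ≥ c, f s x') ≤ (β' : EReal) := iSup₂_le hfs
    have h2 : ((⟪p.1, x'⟫ - β' : ℝ) : EReal) ≤ (p.2 : EReal) := by
      rw [EReal.coe_sub]
      exact le_trans (EReal.sub_le_sub le_rfl hsup) (hpc x')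
    exact EReal.coe_le_coe_iff.mp h2
  have hφpval : u < ⟪y₁, p.1⟫ + p.2 * α := by
    have h2 := hφp
    have h3 := hdecomp p.1 p.2
    rw [Prod.mk.eta] at h3
    rw [h3] at h2
    exact h2
  rcases hα0.lt_or_eq with hαlt | hαeq
  · -- α < 0
    have hpos : (0:ℝ) < -α := by linarith
    have hia : (-α)⁻¹ * α = -1 := by
      rw [inv_mul_eq_div, div_eq_iff (by linarith : -α ≠ 0)]; ring
    have hb : ∀ s, s ≥ c → ∀ z (w : ℝ), conjF (f s) z ≤ (w : EReal) →
        ⟪(-α)⁻¹ • y₁, z⟫ - w ≤ u * (-α)⁻¹ := by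
      intro s hs z w hw
      have h1 := hmemS s hs z w hw
      rw [real_inner_smul_left]
      have h2 : (-α)⁻¹ * (⟪y₁, z⟫ + w * α) ≤ (-α)⁻¹ * u :=
        mul_le_mul_of_nonneg_left h1.le (inv_nonneg.mpr hpos.le)
      have h5 : (-α)⁻¹ * (w * α) = -w := by
        rw [show (-α)⁻¹ * (w * α) = ((-α)⁻¹ * α) * w by ring, hia]; ring
      have h6 : (-α)⁻¹ * (⟪y₁, z⟫ + w * α) = (-α)⁻¹ * ⟪y₁, z⟫ + (-α)⁻¹ * (w * α) := by ring
      linarith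
    have hclaim := claim _ _ hb
    rw [real_inner_smul_right] at hclaim
    have h6 : (-α) * ((-α)⁻¹ * ⟪p.1, y₁⟫ - u * (-α)⁻¹) ≤ (-α) * p.2 :=
      mul_le_mul_of_nonneg_left hclaim hpos.le
    have h7 : (-α) * ((-α)⁻¹ * ⟪p.1, y₁⟫ - u * (-α)⁻¹) = ⟪p.1, y₁⟫ - u := by
      have h8 : (-α) * ((-α)⁻¹ * ⟪p.1, y₁⟫ - u * (-α)⁻¹)
          = ((-α) * (-α)⁻¹) * ⟪p.1, y₁⟫ - ((-α) * (-α)⁻¹) * u := by ring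
      rw [h8, mul_inv_cancel₀ (by linarith : (-α) ≠ 0)]; ring
    have hco := real_inner_comm p.1 y₁
    linarith
  · -- α = 0
    have hxyu : u < ⟪y₁, p.1⟫ := by
      rw [hαeq, mul_zero, add_zero] at hφpval
      exact hφpval
    have key2 : ∀ lam : ℝ, 0 < lam →
        ⟪p.1, x₀⟫ + lam * ⟪p.1, y₁⟫ - (β₁ + lam * u) ≤ p.2 := by
      intro lam hlam
      have hb : ∀ s, s ≥ c → ∀ z (w : ℝ), conjF (f s) z ≤ (w : EReal) →
          ⟪x₀ + lam • y₁, z⟫ - w ≤ β₁ + lam * u := by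
        intro s hs z w hw
        have h1 := hmemS s hs z w hw
        rw [hαeq, mul_zero, add_zero] at h1
        have h2 := hlow s hs z w hw
        rw [inner_add_left, real_inner_smul_left]
        nlinarith
      have hcl := claim _ _ hb
      rw [inner_add_right, real_inner_smul_right] at hcl
      linarith
    have hd : (0:ℝ) < ⟪y₁, p.1⟫ - u := by linarith
    set lam := max 1 ((p.2 - ⟪p.1, x₀⟫ + β₁ + 1) / (⟪y₁, p.1⟫ - u)) with hlamdef
    have hl1 : (0:ℝ) < lam := lt_of_lt_of_le one_pos (le_max_left _ _)
    have h9 := key2 lam hl1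
    have h10 : (p.2 - ⟪p.1, x₀⟫ + β₁ + 1) / (⟪y₁, p.1⟫ - u) ≤ lam := le_max_right _ _
    rw [div_le_iff₀ hd] at h10
    rw [show (⟪p.1, y₁⟫:ℝ) = ⟪y₁, p.1⟫ from real_inner_comm _ _] at h9
    nlinarith

end Test

open Test

/-- For a family `{f_t} ⊆ Γ₀(ℝⁿ)` over a directed set and
`h := limsup_t f_t = inf_t sup_{s ≽ t} f_s`, if `h` is proper then
`epi h* = ⋂_t c̄o (⋃_{s ≽ t} epi f_s*)`. -/
theorem statement12 {n : ℕ} {T : Type*} [Preorder T]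
    (hdir : ∀ a b : T, ∃ c, a ≤ c ∧ b ≤ c)
    (f : T → En n → EReal) (hf : ∀ t, Gamma0 (f t))
    (h : En n → EReal) (hdef : ∀ x, h x = ⨅ t, ⨆ s ≥ t, f s x)
    (hp : ProperF h) :
    epiS (conjF h) = ⋂ t, closure (convexHull ℝ (⋃ s ≥ t, epiS (conjF (f s)))) := by
  have hgmem : ∀ (p : En n × ℝ), p ∈ epiS (conjF h) ↔
      ∀ t, p ∈ epiS (conjF (fun x => ⨆ s ≥ t, f s x)) := by
    intro p
    rw [mem_epiS_conjF]
    constructor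
    · intro hpm t
      rw [mem_epiS_conjF]
      intro x
      refine le_trans (EReal.sub_le_sub le_rfl ?_) (hpm x)
      rw [hdef x]
      exact iInf_le _ t
    · intro hpm x
      rw [hdef x, rsub_iInf]
      refine iSup_le fun t => ?_
      exact (mem_epiS_conjF.mp (hpm t)) x
  ext p
  simp only [mem_iInter]
  constructor
  · intro hpm t
    obtain ⟨x₀, hx₀⟩ := hp.1
    rw [hdef x₀] at hx₀
    obtain ⟨t₁, ht₁⟩ := iInf_lt_iff.mp hx₀
    obtain ⟨c, htc, ht₁c⟩ := hdir t t₁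
    have hbot : ⊥ < ⨆ s ≥ t₁, f s x₀ :=
      lt_of_lt_of_le ((hf t₁).1.2 x₀) (le_iSup₂ (f := fun s (_ : s ≥ t₁) => f s x₀) t₁ le_rfl)
    have hβ₁ : (⨆ s ≥ t₁, f s x₀) = (((⨆ s ≥ t₁, f s x₀).toReal : ℝ) : EReal) :=
      (EReal.coe_toReal ht₁.ne hbot.ne').symm
    have hx₀c : ∀ s, s ≥ c → f s x₀ ≤ (((⨆ s ≥ t₁, f s x₀).toReal : ℝ) : EReal) := by
      intro s hs
      rw [← hβ₁]
      exact le_iSup₂ (f := fun s (_ : s ≥ t₁) => f s x₀) s (le_trans ht₁c hs)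
    have hpc : ∀ x, (⟪p.1, x⟫ : EReal) - (⨆ s ≥ c, f s x) ≤ (p.2 : EReal) :=
      fun x => (mem_epiS_conjF.mp ((hgmem p).mp hpm c)) x
    have hmem := main_sep f hf c x₀ _ hx₀c p hpc
    exact closure_mono (convexHull_mono
      (iUnion₂_mono' fun s hs => ⟨s, le_trans htc hs, subset_rfl⟩)) hmem
  · intro hpm
    rw [hgmem p]
    intro t
    have hsub : closure (convexHull ℝ (⋃ s ≥ t, epiS (conjF (f s)))) ⊆
        epiS (conjF (fun x => ⨆ s ≥ t, f s x)) := by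
      refine closure_minimal (convexHull_min (iUnion₂_subset fun s hs q hq => ?_)
        (epiS_conjF_convex _)) (epiS_conjF_closed _)
      have hmono : conjF (fun x => ⨆ s' ≥ t, f s' x) q.1 ≤ conjF (f s) q.1 :=
        conjF_antitone (fun x => le_iSup₂ (f := fun s' (_ : s' ≥ t) => f s' x) s hs) q.1
      exact le_trans hmono hq
    exact hsub (hpm t)
end
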